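/- arXiv:2109.06019 — 2 statements merged into one kernel-verified Lean document; each statement's English description precedes it below -/
import Mathlib

section
/- The family of cyclic almost-interval partitions, consisting of non-crossing partitions π of [n] such that removing all singletons of π yields a cyclic-interval partition, is singleton-inductive. -/
attribute [local instance] Classical.propDecidable

instance {α : Type*} [Finite α] : Finite (Setoid α) :=
  Finite.of_injective (fun s : Setoid α => s.r)
    (fun a b h => Setoid.ext fun x y => by rw [show a.r = b.r from h])

noncomputable instance {α : Type*} [Finite α] : Fintype (Setoid α) :=
  Fintype.ofFinite _

/-- A set partition of `{0,...,n-1}` (encoded as a `Setoid (Fin n)`) is an *interval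
partition* iff each of its blocks consists of consecutive integers. -/
def IsIntervalSetoid {n : ℕ} (s : Setoid (Fin n)) : Prop :=
  ∀ a b c : Fin n, a ≤ b → b ≤ c → s.r a c → s.r a b

/-- A set partition is *non-crossing* iff there are no `a < b < c < d` with `a, c` in one
block and `b, d` in a different block. -/
def IsNoncrossing {n : ℕ} (s : Setoid (Fin n)) : Prop :=
  ∀ a b c d : Fin n, a < b → b < c → c < d → s.r a c → s.r b d → s.r a b

/-- A subset of `Fin n` is a *cyclic interval* iff it consists of cyclically consecutive
residues mod `n`. -/
def IsCyclicInterval {n : ℕ} (B : Set (Fin n)) : Prop :=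
  ∃ (b : Fin n) (k : ℕ), B = {x | ∃ i ≤ k, x = ((finRotate n) ^ i) b}

/-- A set partition of `Fin n` is a *cyclic-interval partition* iff all of its blocks are
cyclic intervals. -/
def IsCyclicIntervalSetoid {n : ℕ} (s : Setoid (Fin n)) : Prop :=
  ∀ a : Fin n, IsCyclicInterval {x | s.r a x}

/-- The singleton-insertion map `Ψ^n_r` : it inserts a singleton block at position `r`,
shifting the rest of the partition. -/
def insertSingleton {n : ℕ} (r : Fin (n + 1)) (s : Setoid (Fin n)) : Setoid (Fin (n + 1)) where
  r a b := (a = r ∧ b = r) ∨ ∃ i j : Fin n, a = r.succAbove i ∧ b = r.succAbove j ∧ s.r i j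
  iseqv := by
    constructor
    · intro a
      rcases eq_or_ne a r with h | h
      · exact Or.inl ⟨h, h⟩
      · obtain ⟨i, hi⟩ := Fin.exists_succAbove_eq h
        exact Or.inr ⟨i, i, hi.symm, hi.symm, s.refl i⟩
    · rintro a b (⟨h1, h2⟩ | ⟨i, j, h1, h2, h3⟩)
      · exact Or.inl ⟨h2, h1⟩
      · exact Or.inr ⟨j, i, h2, h1, s.symm h3⟩
    · rintro a b c (⟨h1, h2⟩ | ⟨i, j, h1, h2, h3⟩) (⟨g1, g2⟩ | ⟨k, l, g1, g2, g3⟩)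
      · exact Or.inl ⟨h1, g2⟩
      · exact absurd (g1.symm.trans h2) (Fin.succAbove_ne r k)
      · exact absurd (h2.symm.trans g1) (Fin.succAbove_ne r j)
      · have hjk : j = k := Fin.succAbove_right_injective (h2.symm.trans g1)
        exact Or.inr ⟨i, l, h1, g2, s.trans h3 (hjk ▸ g3)⟩

/-- The elements of `Fin n` that do NOT form singleton blocks of `s`. -/
noncomputable def nonSingletons {n : ℕ} (s : Setoid (Fin n)) : Finset (Fin n) :=
  Finset.univ.filter fun x => ∃ y, y ≠ x ∧ s.r x y

/-- `RS s` removes all singleton blocks of the partition `s` and relabels the remaining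
elements in an order-preserving way. -/
noncomputable def RS {n : ℕ} (s : Setoid (Fin n)) : Setoid (Fin (nonSingletons s).card) where
  r i j := s.r ((nonSingletons s).orderIsoOfFin rfl i).1 ((nonSingletons s).orderIsoOfFin rfl j).1
  iseqv := ⟨fun i => s.refl _, fun h => s.symm h, fun h h' => s.trans h h'⟩

/-- An *almost-interval* partition: non-crossing, and removing the singleton blocks yields
an interval partition. -/
def IsAlmostInterval {n : ℕ} (s : Setoid (Fin n)) : Prop :=
  IsNoncrossing s ∧ IsIntervalSetoid (RS s)

/-- A *cyclic almost-interval* partition: non-crossing, and removing the singleton blocks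
yields a cyclic-interval partition. -/
def IsAlmostCyclicInterval {n : ℕ} (s : Setoid (Fin n)) : Prop :=
  IsNoncrossing s ∧ IsCyclicIntervalSetoid (RS s)

/-- The number of crossings of a set partition: the number of quadruples `a < b < c < d`
with `a ~ c`, `b ~ d` lying in two different blocks. -/
noncomputable def crossNum {n : ℕ} (s : Setoid (Fin n)) : ℕ :=
  Finset.card (Finset.univ.filter fun p : Fin n × Fin n × Fin n × Fin n =>
    p.1 < p.2.1 ∧ p.2.1 < p.2.2.1 ∧ p.2.2.1 < p.2.2.2 ∧
      s.r p.1 p.2.2.1 ∧ s.r p.2.1 p.2.2.2 ∧ ¬ s.r p.1 p.2.1)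

/-- `{r}` is a singleton block of the partition `s`. -/
def IsSingletonBlock {n : ℕ} (r : Fin n) (s : Setoid (Fin n)) : Prop :=
  ∀ y, s.r r y → y = r

/-- The partition `{{1,2},{3},...,{n}}` (in `Fin n` indexing: block `{0,1}`, rest singletons). -/
def pairBlockFirst (n : ℕ) : Setoid (Fin n) where
  r x y := x = y ∨ ((x : ℕ) < 2 ∧ (y : ℕ) < 2)
  iseqv := by
    refine ⟨fun x => Or.inl rfl, ?_, ?_⟩
    · rintro x y (rfl | h)
      · exact Or.inl rfl
      · exact Or.inr ⟨h.2, h.1⟩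
    · rintro x y z (rfl | h) h'
      · exact h'
      · rcases h' with rfl | h'
        · exact Or.inr h
        · exact Or.inr ⟨h.1, h'.2⟩

/-- The partition of `Fin n` whose blocks are the singleton `{k}` and its complement. -/
def singletonAt {n : ℕ} (k : Fin n) : Setoid (Fin n) where
  r x y := x = y ∨ (x ≠ k ∧ y ≠ k)
  iseqv := by
    refine ⟨fun x => Or.inl rfl, ?_, ?_⟩
    · rintro x y (rfl | h)
      · exact Or.inl rfl
      · exact Or.inr ⟨h.2, h.1⟩
    · rintro x y z (rfl | h) h'
      · exact h'
      · rcases h' with rfl | h'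
        · exact Or.inr h
        · exact Or.inr ⟨h.1, h'.2⟩

/-- The order embedding `Fin (n - m) → Fin n` that skips the `m` positions `j, ..., j+m-1`. -/
def skipEmb {n : ℕ} (m j : ℕ) (h : j + m ≤ n) (i : Fin (n - m)) : Fin n :=
  ⟨if (i : ℕ) < j then (i : ℕ) else (i : ℕ) + m, by have := i.isLt; split <;> omega⟩


/-!
Inserting a singleton `{r}` and restricting along `r.succAbove` are mutually inverse between
partitions of `Fin n` and partitions of `Fin (n + 1)` having `{r}` as a block, and both maps
respect refinement. Neither being non-crossing nor the reduction `RS` notices a singleton block: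
a crossing never involves `r`, and the non-singleton elements of `Ψ_r π` are the images of
those of `π` under the order embedding `r.succAbove`, so `RS (Ψ_r π)` is `RS π` relabelled.
-/

theorem Finset.orderEmbOfFin_apply_of_eq_map {α β : Type*} [LinearOrder α] [LinearOrder β]
    (f : α ↪o β) {s : Finset α} {t : Finset β} (hts : t = s.map f.toEmbedding)
    (i : Fin t.card) :
    t.orderEmbOfFin rfl i
      = f (s.orderEmbOfFin rfl (Fin.cast (by rw [hts, Finset.card_map]) i)) := by
  have hcard : t.card = s.card := by rw [hts, Finset.card_map]
  have hmem (j : Fin t.card) : f (s.orderEmbOfFin rfl (Fin.cast hcard j)) ∈ t := by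
    subst hts
    exact Finset.mem_map_of_mem f.toEmbedding (Finset.orderEmbOfFin_mem s rfl _)
  have hmono :=
    f.strictMono.comp ((s.orderEmbOfFin rfl).strictMono.comp (Fin.cast_strictMono hcard))
  exact congrFun (Finset.orderEmbOfFin_unique rfl hmem hmono).symm i

theorem IsNoncrossing.comap {n m : ℕ} {σ : Setoid (Fin m)} (hσ : IsNoncrossing σ)
    {f : Fin n → Fin m} (hf : StrictMono f) : IsNoncrossing (σ.comap f) :=
  fun _ _ _ _ hab hbc hcd hac hbd => hσ _ _ _ _ (hf hab) (hf hbc) (hf hcd) hac hbd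

theorem isCyclicIntervalSetoid_comap_cast {m k : ℕ} (h : m = k) (s : Setoid (Fin k)) :
    IsCyclicIntervalSetoid (s.comap (Fin.cast h)) ↔ IsCyclicIntervalSetoid s := by
  subst h
  exact Iff.rfl

section insertSingleton

variable {n : ℕ} (r : Fin (n + 1)) (s : Setoid (Fin n))

@[simp]
theorem insertSingleton_rel_succAbove {i j : Fin n} :
    (insertSingleton r s).r (r.succAbove i) (r.succAbove j) ↔ s.r i j := by
  constructor
  · rintro (⟨hi, -⟩ | ⟨i', j', hi, hj, hij⟩)
    · exact absurd hi (Fin.succAbove_ne r i)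
    · rwa [Fin.succAbove_right_injective hi, Fin.succAbove_right_injective hj]
  · exact fun h => Or.inr ⟨i, j, rfl, rfl, h⟩

theorem comap_succAbove_insertSingleton : (insertSingleton r s).comap r.succAbove = s :=
  Setoid.ext fun _ _ => insertSingleton_rel_succAbove r s

theorem isSingletonBlock_insertSingleton : IsSingletonBlock r (insertSingleton r s) := by
  rintro y (⟨-, hy⟩ | ⟨i, -, hi, -, -⟩)
  · exact hy
  · exact absurd hi.symm (Fin.succAbove_ne r i)

theorem insertSingleton_comap_succAbove {σ : Setoid (Fin (n + 1))} (hσ : IsSingletonBlock r σ) :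
    insertSingleton r (σ.comap r.succAbove) = σ := by
  refine Setoid.ext fun a b => ⟨?_, fun h => ?_⟩
  · rintro (⟨rfl, rfl⟩ | ⟨i, j, rfl, rfl, hij⟩)
    · exact σ.refl _
    · exact hij
  rcases eq_or_ne a r with rfl | ha
  · exact Or.inl ⟨rfl, hσ b h⟩
  have hb : b ≠ r := fun hb => ha (hσ a (σ.symm (hb ▸ h)))
  obtain ⟨i, rfl⟩ := Fin.exists_succAbove_eq ha
  obtain ⟨j, rfl⟩ := Fin.exists_succAbove_eq hb
  exact Or.inr ⟨i, j, rfl, rfl, h⟩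

theorem insertSingleton_le_insertSingleton_iff {t : Setoid (Fin n)} :
    insertSingleton r s ≤ insertSingleton r t ↔ s ≤ t := by
  refine ⟨fun h => ?_, fun h => ?_⟩
  · rw [← comap_succAbove_insertSingleton r s, ← comap_succAbove_insertSingleton r t]
    exact fun _ _ hij => h hij
  · rintro a b (hab | ⟨i, j, rfl, rfl, hij⟩)
    · exact Or.inl hab
    · exact Or.inr ⟨i, j, rfl, rfl, h hij⟩

theorem isNoncrossing_insertSingleton_iff :
    IsNoncrossing (insertSingleton r s) ↔ IsNoncrossing s := by
  refine ⟨fun h => ?_, fun h => ?_⟩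
  · rw [← comap_succAbove_insertSingleton r s]
    exact h.comap (Fin.strictMono_succAbove r)
  rintro a b c d hab hbc hcd (⟨rfl, rfl⟩ | ⟨i, k, rfl, rfl, hik⟩) hbd
  · exact absurd (hab.trans hbc) (lt_irrefl _)
  rcases hbd with ⟨rfl, rfl⟩ | ⟨j, l, rfl, rfl, hjl⟩
  · exact absurd (hbc.trans hcd) (lt_irrefl _)
  rw [Fin.succAbove_lt_succAbove_iff] at hab hbc hcd
  exact (insertSingleton_rel_succAbove r s).2 (h i j k l hab hbc hcd hik hjl)

theorem nonSingletons_insertSingleton :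
    nonSingletons (insertSingleton r s)
      = (nonSingletons s).map r.succAboveOrderEmb.toEmbedding := by
  ext x
  simp only [nonSingletons, Finset.mem_filter, Finset.mem_univ, true_and, Finset.mem_map]
  constructor
  · rintro ⟨y, hyx, hxy⟩
    have hx : x ≠ r := fun hx =>
      hyx ((isSingletonBlock_insertSingleton r s y (hx ▸ hxy)).trans hx.symm)
    have hy : y ≠ r := fun hy =>
      hx (isSingletonBlock_insertSingleton r s x (hy ▸ (insertSingleton r s).symm hxy))
    obtain ⟨i, rfl⟩ := Fin.exists_succAbove_eq hx
    obtain ⟨j, rfl⟩ := Fin.exists_succAbove_eq hy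
    exact ⟨i, ⟨j, fun h => hyx (h ▸ rfl), (insertSingleton_rel_succAbove r s).1 hxy⟩, rfl⟩
  · rintro ⟨i, ⟨j, hji, hij⟩, rfl⟩
    exact ⟨r.succAbove j, fun h => hji (Fin.succAbove_right_injective h),
      (insertSingleton_rel_succAbove r s).2 hij⟩

theorem RS_insertSingleton :
    RS (insertSingleton r s) = (RS s).comap
      (Fin.cast (by rw [nonSingletons_insertSingleton, Finset.card_map])) := by
  ext i j
  change (insertSingleton r s).r _ _ ↔ s.r _ _
  simp only [Finset.coe_orderIsoOfFin_apply,
    Finset.orderEmbOfFin_apply_of_eq_map _ (nonSingletons_insertSingleton r s)]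
  exact insertSingleton_rel_succAbove r s

theorem isAlmostCyclicInterval_insertSingleton_iff :
    IsAlmostCyclicInterval (insertSingleton r s) ↔ IsAlmostCyclicInterval s := by
  rw [IsAlmostCyclicInterval, IsAlmostCyclicInterval, isNoncrossing_insertSingleton_iff,
    RS_insertSingleton, isCyclicIntervalSetoid_comap_cast]

end insertSingleton

theorem almostCyclicInterval_singletonInductive_general (n : ℕ) (r : Fin (n + 1)) :
    ∃ e : {s : Setoid (Fin n) // IsAlmostCyclicInterval s} ≃o
        {σ : Setoid (Fin (n + 1)) // IsAlmostCyclicInterval σ ∧ IsSingletonBlock r σ},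
      ∀ π : {s : Setoid (Fin n) // IsAlmostCyclicInterval s},
        (e π).val = insertSingleton r π.val := by
  refine ⟨{ toFun := fun π => ⟨insertSingleton r π,
              (isAlmostCyclicInterval_insertSingleton_iff r π).2 π.2,
              isSingletonBlock_insertSingleton r π⟩
            invFun := fun σ => ⟨σ.1.comap r.succAbove,
              (isAlmostCyclicInterval_insertSingleton_iff r _).1
                ((insertSingleton_comap_succAbove r σ.2.2).symm ▸ σ.2.1)⟩
            left_inv := fun π => Subtype.ext (comap_succAbove_insertSingleton r π)
            right_inv := fun σ => Subtype.ext (insertSingleton_comap_succAbove r σ.2.2)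
            map_rel_iff' := insertSingleton_le_insertSingleton_iff r _ }, fun _ => rfl⟩

theorem almostCyclicInterval_singletonInductive (n : ℕ) (hn : 1 ≤ n) (r : Fin (n + 1)) :
    ∃ e : {s : Setoid (Fin n) // IsAlmostCyclicInterval s} ≃o
        {σ : Setoid (Fin (n + 1)) // IsAlmostCyclicInterval σ ∧ IsSingletonBlock r σ},
      ∀ π : {s : Setoid (Fin n) // IsAlmostCyclicInterval s},
        (e π).val = insertSingleton r π.val :=
  almostCyclicInterval_singletonInductive_general n r
end

section
/- In the lattice of almost-interval partitions Ĩ(n) with n ≥ 3, let σ = {{1,2},{3},...,{n}}. The partitions π ∈ Ĩ(n) with π ∨ σ = 1_n are exactly the three partitions 1_n, {{1},{2,...,n}}, and {{2},{1,3,...,n}}. -/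
attribute [local instance] Classical.propDecidable

/-! If `{k}` with `k ≥ 2` were a singleton block of `π`, then `singletonAt k` would be an
almost-interval upper bound of `π` and `σ` other than `1_n`; so would the two-block interval
partition cut at `m` if `π` refined it for some `2 ≤ m < n`. Hence every `k ≥ 2` is a
non-singleton and every such cut is crossed by a block of `π`. As a block of an almost-interval
partition contains every non-singleton lying between two of its elements, the crossing at
`k + 1` puts `k` and `k + 1` in one block, and the crossing at `2` joins `0` or `1` to it.
Conversely, `1_n` and `singletonAt k` for `k ∈ {0, 1}` become `1_n` once `0` and `1` are joined. -/

section AlmostInterval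

variable {n : ℕ}

theorem mem_nonSingletons_iff {s : Setoid (Fin n)} {x : Fin n} :
    x ∈ nonSingletons s ↔ ∃ y, y ≠ x ∧ s.r x y := by
  simp [nonSingletons]

theorem mem_nonSingletons_of_rel {s : Setoid (Fin n)} {x y : Fin n} (hxy : x ≠ y)
    (h : s.r x y) : x ∈ nonSingletons s :=
  mem_nonSingletons_iff.2 ⟨y, hxy.symm, h⟩

theorem isSingletonBlock_of_notMem_nonSingletons {s : Setoid (Fin n)} {k : Fin n}
    (hk : k ∉ nonSingletons s) : IsSingletonBlock k s := by
  intro y hy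
  by_contra hyk
  exact hk (mem_nonSingletons_of_rel (Ne.symm hyk) hy)

theorem IsSingletonBlock.le_singletonAt {s : Setoid (Fin n)} {k : Fin n}
    (hk : IsSingletonBlock k s) : s ≤ singletonAt k := by
  intro x y hxy
  by_cases hx : x = k
  · subst hx
    exact Or.inl (hk y hxy).symm
  by_cases hy : y = k
  · subst hy
    exact Or.inl (hk x (s.symm hxy))
  exact Or.inr ⟨hx, hy⟩

theorem singletonAt_ne_top {k j : Fin n} (hjk : j ≠ k) : singletonAt k ≠ ⊤ := by
  intro h
  have hkj : (singletonAt k).r k j := by rw [h]; trivial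
  rcases hkj with hkj | ⟨hkk, -⟩
  · exact hjk hkj.symm
  · exact hkk rfl

theorem eq_top_of_singletonAt_le {τ : Setoid (Fin n)} {k j : Fin n} (hjk : j ≠ k)
    (hle : singletonAt k ≤ τ) (hkj : τ.r k j) : τ = ⊤ := by
  have hto : ∀ x, τ.r x j := by
    intro x
    by_cases hx : x = k
    · exact hx ▸ hkj
    · exact hle (Or.inr ⟨hx, hjk⟩)
  exact Setoid.eq_top_iff.2 fun x y => τ.trans (hto x) (τ.symm (hto y))

theorem eq_singletonAt_of_forall_ne_iff {s : Setoid (Fin n)} {k c : Fin n}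
    (h : ∀ x, x ≠ k ↔ s.r x c) : s = singletonAt k := by
  have hk : ¬ s.r k c := fun hkc => (h k).2 hkc rfl
  ext x y
  constructor
  · intro hxy
    by_cases hx : x = k
    · by_cases hy : y = k
      · exact Or.inl (hx.trans hy.symm)
      · exact absurd (s.trans (hx ▸ hxy) ((h y).1 hy)) hk
    by_cases hy : y = k
    · exact absurd (s.trans (hy ▸ s.symm hxy) ((h x).1 hx)) hk
    exact Or.inr ⟨hx, hy⟩
  · rintro (rfl | ⟨hx, hy⟩)
    · exact s.refl x
    · exact s.trans ((h x).1 hx) (s.symm ((h y).1 hy))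

theorem IsIntervalSetoid.isAlmostInterval {s : Setoid (Fin n)} (hs : IsIntervalSetoid s) :
    IsAlmostInterval s := by
  refine ⟨fun a b c _ hab hbc _ hac _ => hs a b c hab.le hbc.le hac, ?_⟩
  intro i j l hij hjl hil
  set e := (nonSingletons s).orderIsoOfFin rfl
  exact hs _ _ _ (e.monotone hij) (e.monotone hjl) hil

theorem isAlmostInterval_singletonAt (k : Fin n) : IsAlmostInterval (singletonAt k) := by
  have hk : k ∉ nonSingletons (singletonAt k) := by
    rw [mem_nonSingletons_iff]
    rintro ⟨y, hy, rfl | ⟨hkk, -⟩⟩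
    exacts [hy rfl, hkk rfl]
  refine ⟨?_, ?_⟩
  · rintro a b c d hab hbc hcd (rfl | ⟨hak, -⟩) (rfl | ⟨hbk, -⟩)
    exacts [absurd (hab.trans hbc) (lt_irrefl a), absurd (hab.trans hbc) (lt_irrefl a),
      absurd (hbc.trans hcd) (lt_irrefl b), Or.inr ⟨hak, hbk⟩]
  · intro i j _ _ _ _
    set e := (nonSingletons (singletonAt k)).orderIsoOfFin rfl
    exact Or.inr ⟨fun h => hk (h ▸ (e i).2 :), fun h => hk (h ▸ (e j).2 :)⟩

def cutAt (n m : ℕ) : Setoid (Fin n) where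
  r x y := ((x : ℕ) < m ↔ (y : ℕ) < m)
  iseqv := ⟨fun _ => Iff.rfl, Iff.symm, Iff.trans⟩

theorem isIntervalSetoid_cutAt (m : ℕ) : IsIntervalSetoid (cutAt n m) := by
  intro a b c hab hbc hac
  change (a : ℕ) < m ↔ (c : ℕ) < m at hac
  change (a : ℕ) < m ↔ (b : ℕ) < m
  rw [Fin.le_def] at hab hbc
  omega

theorem cutAt_ne_top {m : ℕ} (hm : 0 < m) (hmn : m < n) : cutAt n m ≠ ⊤ := by
  intro h
  have : (cutAt n m).r ⟨0, by omega⟩ ⟨m, hmn⟩ := by rw [h]; trivial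
  change 0 < m ↔ m < m at this
  omega

theorem pairBlockFirst_le_cutAt {m : ℕ} (hm : 2 ≤ m) : pairBlockFirst n ≤ cutAt n m := by
  rintro x y (rfl | ⟨hx, hy⟩)
  · exact Iff.rfl
  · change (x : ℕ) < m ↔ (y : ℕ) < m
    omega

theorem pairBlockFirst_le_singletonAt {k : Fin n} (hk : 2 ≤ (k : ℕ)) :
    pairBlockFirst n ≤ singletonAt k := by
  rintro x y (rfl | ⟨hx, hy⟩)
  · exact Or.inl rfl
  · exact Or.inr ⟨fun h => by omega, fun h => by omega⟩

theorem IsAlmostInterval.rel_of_le_of_le {s : Setoid (Fin n)} (hs : IsAlmostInterval s)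
    {x y z : Fin n} (hxy : x ≤ y) (hyz : y ≤ z) (hy : y ∈ nonSingletons s) (hxz : s.r x z) :
    s.r x y := by
  rcases eq_or_ne x z with rfl | hne
  · rw [le_antisymm hxy hyz]
  set e := (nonSingletons s).orderIsoOfFin rfl
  have hx : x ∈ nonSingletons s := mem_nonSingletons_of_rel hne hxz
  have hz : z ∈ nonSingletons s := mem_nonSingletons_of_rel hne.symm (s.symm hxz)
  have hxz' : (RS s).r (e.symm ⟨x, hx⟩) (e.symm ⟨z, hz⟩) := by
    change s.r (e (e.symm ⟨x, hx⟩)).1 (e (e.symm ⟨z, hz⟩)).1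
    simpa using hxz
  have hxy' := hs.2 _ (e.symm ⟨y, hy⟩) _ (e.symm.monotone hxy) (e.symm.monotone hyz) hxz'
  change s.r (e (e.symm ⟨x, hx⟩)).1 (e (e.symm ⟨y, hy⟩)).1 at hxy'
  simpa using hxy'

theorem IsAlmostInterval.rel_of_rel_across {s : Setoid (Fin n)} (hs : IsAlmostInterval s)
    {u v a b : Fin n} (hua : u ≤ a) (hav : a ≤ v) (hub : u ≤ b) (hbv : b ≤ v)
    (ha : a ∈ nonSingletons s) (hb : b ∈ nonSingletons s) (huv : s.r u v) : s.r a b :=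
  s.trans (s.symm (hs.rel_of_le_of_le hua hav ha huv)) (hs.rel_of_le_of_le hub hbv hb huv)

theorem IsAlmostInterval.rel_of_le {s : Setoid (Fin n)} (hs : IsAlmostInterval s) {c : Fin n}
    (hns : ∀ k, c ≤ k → k ∈ nonSingletons s)
    (hcross : ∀ m, (c : ℕ) < m → m < n → ∃ x y : Fin n, (x : ℕ) < m ∧ m ≤ (y : ℕ) ∧ s.r x y)
    {k : Fin n} (hk : c ≤ k) : s.r c k := by
  obtain ⟨d, hd⟩ := Nat.exists_eq_add_of_le (Fin.le_def.1 hk)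
  induction d generalizing k with
  | zero => rw [Fin.ext (by omega : (k : ℕ) = c)]
  | succ d ih =>
    have hlt : (c : ℕ) + d < n := by omega
    obtain ⟨x, y, hx, hy, hxy⟩ := hcross (c + d + 1) (by omega) (by omega)
    set a : Fin n := ⟨c + d, hlt⟩ with ha
    have hca : c ≤ a := Fin.le_def.2 (by simp [a])
    refine s.trans (ih hca rfl) (hs.rel_of_rel_across ?_ ?_ ?_ ?_ (hns a hca) (hns k hk) hxy) <;>
      simp only [Fin.le_def, ha] <;> omega

end AlmostInterval

section JoinEqTop

variable {n : ℕ} {π σ : Setoid (Fin n)}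

theorem mem_nonSingletons_of_forall_eq_top
    (H : ∀ τ : Setoid (Fin n), IsAlmostInterval τ → π ≤ τ → σ ≤ τ → τ = ⊤)
    {k j : Fin n} (hjk : j ≠ k) (hσ : σ ≤ singletonAt k) : k ∈ nonSingletons π := by
  by_contra hk
  exact singletonAt_ne_top hjk <| H _ (isAlmostInterval_singletonAt k)
    (isSingletonBlock_of_notMem_nonSingletons hk).le_singletonAt hσ

theorem exists_rel_across_of_forall_eq_top
    (H : ∀ τ : Setoid (Fin n), IsAlmostInterval τ → π ≤ τ → σ ≤ τ → τ = ⊤)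
    {m : ℕ} (hm : 0 < m) (hmn : m < n) (hσ : σ ≤ cutAt n m) :
    ∃ x y : Fin n, (x : ℕ) < m ∧ m ≤ (y : ℕ) ∧ π.r x y := by
  by_contra! hsep
  have hle : π ≤ cutAt n m := by
    intro x y hxy
    change (x : ℕ) < m ↔ (y : ℕ) < m
    constructor
    · intro hx
      by_contra hy
      exact hsep x y hx (not_lt.1 hy) hxy
    · intro hy
      by_contra hx
      exact hsep y x hy (not_lt.1 hx) (π.symm hxy)
  exact cutAt_ne_top hm hmn (H _ (isIntervalSetoid_cutAt m).isAlmostInterval hle hσ)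

end JoinEqTop

theorem eq_top_or_eq_singletonAt_of_rel_two {n : ℕ} (hn : 3 ≤ n) {s : Setoid (Fin n)}
    (hbig : ∀ k : Fin n, 2 ≤ (k : ℕ) → s.r k ⟨2, by omega⟩)
    (hsmall : ∃ x : Fin n, (x : ℕ) < 2 ∧ s.r x ⟨2, by omega⟩) :
    s = ⊤ ∨ s = singletonAt ⟨0, by omega⟩ ∨ s = singletonAt ⟨1, by omega⟩ := by
  set c : Fin n := ⟨2, by omega⟩
  have hsplit : ∀ x : Fin n, x = ⟨0, by omega⟩ ∨ x = ⟨1, by omega⟩ ∨ 2 ≤ (x : ℕ) := by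
    intro x
    simp only [Fin.ext_iff]
    omega
  by_cases h0 : s.r ⟨0, by omega⟩ c <;> by_cases h1 : s.r ⟨1, by omega⟩ c
  · refine Or.inl (Setoid.eq_top_iff.2 fun x y => s.trans (?_ : s.r x c) (s.symm (?_ : s.r y c)))
    · rcases hsplit x with rfl | rfl | hx
      exacts [h0, h1, hbig x hx]
    · rcases hsplit y with rfl | rfl | hy
      exacts [h0, h1, hbig y hy]
  · refine Or.inr (Or.inr (eq_singletonAt_of_forall_ne_iff (c := c) fun x => ⟨fun hx => ?_, ?_⟩))
    · rcases hsplit x with rfl | rfl | hx'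
      exacts [h0, absurd rfl hx, hbig x hx']
    · rintro hx rfl
      exact h1 hx
  · refine Or.inr (Or.inl (eq_singletonAt_of_forall_ne_iff (c := c) fun x => ⟨fun hx => ?_, ?_⟩))
    · rcases hsplit x with rfl | rfl | hx'
      exacts [absurd rfl hx, h1, hbig x hx']
    · rintro hx rfl
      exact h0 hx
  · obtain ⟨x, hx, hxc⟩ := hsmall
    rcases hsplit x with rfl | rfl | hx'
    exacts [absurd hxc h0, absurd hxc h1, absurd hx' (by omega)]

theorem almostInterval_join_with_pairBlock_eq_top (n : ℕ) (hn : 3 ≤ n)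
    (π : Setoid (Fin n)) (hπ : IsAlmostInterval π) :
    (∀ τ : Setoid (Fin n), IsAlmostInterval τ → π ≤ τ → pairBlockFirst n ≤ τ → τ = ⊤) ↔
      (π = ⊤ ∨ π = singletonAt (⟨0, by omega⟩ : Fin n) ∨
        π = singletonAt (⟨1, by omega⟩ : Fin n)) := by
  have h01 : (pairBlockFirst n).r ⟨0, by omega⟩ ⟨1, by omega⟩ := Or.inr ⟨by simp, by simp⟩
  constructor
  · intro H
    set c : Fin n := ⟨2, by omega⟩
    have hns : ∀ k : Fin n, c ≤ k → k ∈ nonSingletons π := fun k hk =>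
      mem_nonSingletons_of_forall_eq_top H (j := ⟨0, by omega⟩)
        (Fin.ne_of_val_ne (by simp [c, Fin.le_def] at hk ⊢; omega))
        (pairBlockFirst_le_singletonAt hk)
    have hcross : ∀ m, 2 ≤ m → m < n → ∃ x y : Fin n, (x : ℕ) < m ∧ m ≤ (y : ℕ) ∧ π.r x y :=
      fun m hm hmn => exists_rel_across_of_forall_eq_top H (by omega) hmn
        (pairBlockFirst_le_cutAt hm)
    refine eq_top_or_eq_singletonAt_of_rel_two hn
      (fun k hk => π.symm (hπ.rel_of_le hns (fun m hm => hcross m hm.le) hk)) ?_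
    obtain ⟨x, y, hx, hy, hxy⟩ := hcross 2 le_rfl (by omega)
    exact ⟨x, hx, hπ.rel_of_le_of_le (Fin.le_def.2 hx.le) hy (hns c le_rfl) hxy⟩
  · rintro (rfl | rfl | rfl) τ - hπτ hστ
    · exact top_le_iff.1 hπτ
    · exact eq_top_of_singletonAt_le (by simp) hπτ (hστ h01)
    · exact eq_top_of_singletonAt_le (by simp) hπτ (τ.symm (hστ h01))
end
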